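/- arXiv:1810.04397 — 4 statements merged into one kernel-verified Lean document; each statement's English description precedes it below -/
import Mathlib

section
/- For every integer t ≥ 1, there exists a finite simple graph G with γ(G) = 1, γ_MB(G) = 1, and γ_MB'(G) = t. (For instance, the graph G_t obtained from t disjoint triangles by identifying one vertex of each triangle into a single vertex of degree 2t has these values.) -/
variable {V : Type*}

/-- `D` dominates every vertex of `G` outside of `A`: each such vertex lies in the
closed neighborhood of some member of `D`. (Take `A = ∅` for ordinary domination.) -/
def Dominates (G : SimpleGraph V) (A : Set V) (D : Finset V) : Prop :=
  ∀ v : V, v ∉ A → ∃ u ∈ D, u = v ∨ G.Adj u v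

/-- `MBWin G A t k D S`: in the Maker-Breaker domination game on `G` where the vertices of
`A` are regarded as already dominated, with `D` the set of vertices selected so far by
Dominator, `S` the set selected so far by Staller, and where it is Dominator's turn if
`t = true` and Staller's turn if `t = false`, Dominator has a strategy guaranteeing that
his selected vertices dominate `V \ A` after he selects at most `k` further vertices.
Players alternately select vertices not previously selected by either player; if no
unselected vertex remains and Dominator's vertices do not dominate, Dominator has lost. -/
inductive MBWin [Fintype V] [DecidableEq V] (G : SimpleGraph V) (A : Set V) :
    Bool → ℕ → Finset V → Finset V → Prop
  | win (t : Bool) (k : ℕ) (D S : Finset V) : Dominates G A D → MBWin G A t k D S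
  | dmove (k : ℕ) (D S : Finset V) (v : V) : v ∉ D → v ∉ S →
      MBWin G A false k (insert v D) S → MBWin G A true (k + 1) D S
  | smove (k : ℕ) (D S : Finset V) : D ∪ S ≠ Finset.univ →
      (∀ v, v ∉ D → v ∉ S → MBWin G A true k D (insert v S)) → MBWin G A false k D S

/-- The Maker-Breaker domination number `γ_MB(G|A)` of the game in which the vertices of `A`
are regarded as already dominated and Dominator moves first: the minimum `m` such that
Dominator has a winning strategy using at most `m` of his own moves, and `⊤ = ∞` if
Dominator has no winning strategy. -/
noncomputable def gammaMBRes [Fintype V] [DecidableEq V] (G : SimpleGraph V) (A : Set V) :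
    ℕ∞ :=
  sInf ((fun m : ℕ => (m : ℕ∞)) '' {m : ℕ | MBWin G A true m ∅ ∅})

/-- `γ_MB'(G|A)`: as `gammaMBRes`, but Staller moves first. -/
noncomputable def gammaMBRes' [Fintype V] [DecidableEq V] (G : SimpleGraph V) (A : Set V) :
    ℕ∞ :=
  sInf ((fun m : ℕ => (m : ℕ∞)) '' {m : ℕ | MBWin G A false m ∅ ∅})

/-- The Maker-Breaker domination number `γ_MB(G)` (Dominator moves first). -/
noncomputable def gammaMB [Fintype V] [DecidableEq V] (G : SimpleGraph V) : ℕ∞ :=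
  gammaMBRes G ∅

/-- The Staller-start Maker-Breaker domination number `γ_MB'(G)`. -/
noncomputable def gammaMB' [Fintype V] [DecidableEq V] (G : SimpleGraph V) : ℕ∞ :=
  gammaMBRes' G ∅

/-- The domination number `γ(G)`: the minimum size of a dominating set of `G`. -/
noncomputable def dominationNumber [Fintype V] (G : SimpleGraph V) : ℕ :=
  sInf {m : ℕ | ∃ D : Finset V, Dominates G ∅ D ∧ D.card = m}

/-- A `γ`-set of `G`: a dominating set of minimum size. -/
def IsGammaSet [Fintype V] (G : SimpleGraph V) (D : Finset V) : Prop :=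
  Dominates G ∅ D ∧ D.card = dominationNumber G


/-! The friendship graph `G_t` has the centre as a universal vertex, so `γ = γ_MB = 1`. In the
S-game Staller takes the centre; a dominating set avoiding it must meet all `t` triangles,
so Dominator needs `t` moves, and `t` moves suffice since he can answer each move of Staller
inside a triangle by the other outer vertex of that triangle. -/

lemma not_dominates_empty [Nonempty V] {G : SimpleGraph V} : ¬ Dominates G ∅ ∅ := fun h => by
  obtain ⟨u, hu, -⟩ := h (Classical.arbitrary V) (Set.notMem_empty _)
  exact Finset.notMem_empty u hu

lemma dominates_singleton_of_forall_adj {G : SimpleGraph V} {A : Set V} {c : V}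
    (hc : ∀ v, v ≠ c → G.Adj c v) : Dominates G A {c} := fun v _ =>
  ⟨c, Finset.mem_singleton_self c, (eq_or_ne c v).imp id fun h => hc v h.symm⟩

section Game

variable [Fintype V] [DecidableEq V] {G : SimpleGraph V} {A : Set V}

lemma MBWin.dominates_of_true_zero {D S : Finset V} (h : MBWin G A true 0 D S) :
    Dominates G A D := by
  cases h with
  | win _ _ _ _ hD => exact hD

lemma MBWin.exists_dominates_union {b : Bool} {k : ℕ} {D S : Finset V}
    (h : MBWin G A b k D S) :
    ∃ E : Finset V, Disjoint E S ∧ E.card ≤ k ∧ Dominates G A (D ∪ E) := by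
  induction h with
  | win b k D S hD => exact ⟨∅, Finset.disjoint_empty_left S, by simp, by simpa using hD⟩
  | dmove k D S v _ hvS _ ih =>
    obtain ⟨E, hES, hEk, hE⟩ := ih
    refine ⟨insert v E, Finset.disjoint_insert_left.mpr ⟨hvS, hES⟩,
      (Finset.card_insert_le v E).trans (by omega), ?_⟩
    simpa only [Finset.union_insert, Finset.insert_union] using hE
  | smove k D S hfull _ ih =>
    obtain ⟨v, hv⟩ : ∃ v, v ∉ D ∪ S := by
      by_contra! hall
      exact hfull (Finset.eq_univ_iff_forall.mpr hall)
    rw [Finset.mem_union, not_or] at hv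
    obtain ⟨E, hES, hEk, hE⟩ := ih v hv.1 hv.2
    exact ⟨E, Finset.disjoint_of_subset_right (Finset.subset_insert v S) hES, hEk, hE⟩

lemma MBWin.exists_dominates_notMem {k : ℕ} (h : MBWin G ∅ false k ∅ ∅) (c : V) :
    ∃ E : Finset V, c ∉ E ∧ E.card ≤ k ∧ Dominates G ∅ E := by
  have : Nonempty V := ⟨c⟩
  cases h with
  | win _ _ _ _ hD => exact absurd hD not_dominates_empty
  | smove _ _ _ _ h =>
    obtain ⟨E, hE, hEk, hdom⟩ :=
      (h c (Finset.notMem_empty c) (Finset.notMem_empty c)).exists_dominates_union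
    exact ⟨E, Finset.disjoint_singleton_right.mp hE, hEk, by simpa using hdom⟩

lemma gammaMBRes_eq_of_isLeast {m : ℕ} (h : IsLeast {k | MBWin G A true k ∅ ∅} m) :
    gammaMBRes G A = m :=
  (Nat.mono_cast.map_isLeast h).csInf_eq

lemma gammaMBRes'_eq_of_isLeast {m : ℕ} (h : IsLeast {k | MBWin G A false k ∅ ∅} m) :
    gammaMBRes' G A = m :=
  (Nat.mono_cast.map_isLeast h).csInf_eq

lemma gammaMB_eq_one_of_forall_adj {c : V} (hc : ∀ v, v ≠ c → G.Adj c v) :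
    gammaMB G = 1 := by
  have : Nonempty V := ⟨c⟩
  refine gammaMBRes_eq_of_isLeast ⟨?_, fun k hk => ?_⟩
  · exact MBWin.dmove 0 ∅ ∅ c (Finset.notMem_empty c) (Finset.notMem_empty c)
      (MBWin.win _ _ _ _ (dominates_singleton_of_forall_adj hc))
  · rcases Nat.eq_zero_or_pos k with rfl | hpos
    · exact absurd (MBWin.dominates_of_true_zero hk) not_dominates_empty
    · exact hpos

end Game

lemma dominationNumber_eq_one_of_forall_adj [Fintype V] {G : SimpleGraph V} {c : V}
    (hc : ∀ v, v ≠ c → G.Adj c v) : dominationNumber G = 1 := by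
  have : Nonempty V := ⟨c⟩
  refine IsLeast.csInf_eq ⟨⟨{c}, dominates_singleton_of_forall_adj hc, rfl⟩, ?_⟩
  rintro k ⟨D, hD, rfl⟩
  refine Finset.one_le_card.mpr (Finset.nonempty_iff_ne_empty.mpr ?_)
  rintro rfl
  exact not_dominates_empty hD

section Pairing

/-- The pairs `{e (i, false), e (i, true)}`, disjoint as `e` is injective, that `D` misses. -/
def unhitPairs [DecidableEq V] {ι : Type*} [Fintype ι] (e : ι × Bool ↪ V) (D : Finset V) :
    Finset ι :=
  Finset.univ.filter fun i => ∀ x, e (i, x) ∉ D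

variable [DecidableEq V] {ι : Type*} [Fintype ι] {e : ι × Bool ↪ V}

lemma mem_unhitPairs {D : Finset V} {i : ι} : i ∈ unhitPairs e D ↔ ∀ x, e (i, x) ∉ D := by
  simp [unhitPairs]

lemma exists_mem_of_unhitPairs_eq_empty {D : Finset V} (h : unhitPairs e D = ∅) (i : ι) :
    ∃ x, e (i, x) ∈ D := by
  have hi : i ∉ unhitPairs e D := h ▸ Finset.notMem_empty i
  rw [mem_unhitPairs] at hi
  push Not at hi
  exact hi

variable [DecidableEq ι]

lemma unhitPairs_insert (D : Finset V) (i : ι) (y : Bool) :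
    unhitPairs e (insert (e (i, y)) D) = (unhitPairs e D).erase i := by
  ext j
  simp only [mem_unhitPairs, Finset.mem_erase, Finset.mem_insert, e.apply_eq_iff_eq,
    Prod.ext_iff, not_or]
  constructor
  · intro h
    exact ⟨fun hji => (h y).1 ⟨hji, rfl⟩, fun x => (h x).2⟩
  · rintro ⟨hji, h⟩ x
    exact ⟨fun hx => hji hx.1, h x⟩

variable [Fintype V] {G : SimpleGraph V} {A : Set V}

lemma mbWin_false_of_pairing
    (hdom : ∀ D : Finset V, (∀ i, ∃ x, e (i, x) ∈ D) → Dominates G A D) (k : ℕ)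
    (D S : Finset V) (hk : (unhitPairs e D).card ≤ k)
    (hS : ∀ i ∈ unhitPairs e D, ∀ x, e (i, x) ∉ S) : MBWin G A false k D S := by
  induction k generalizing D S with
  | zero =>
    exact MBWin.win _ _ _ _ (hdom D (exists_mem_of_unhitPairs_eq_empty
      (Finset.card_eq_zero.mp (Nat.le_zero.mp hk))))
  | succ k ih =>
    rcases (unhitPairs e D).eq_empty_or_nonempty with hempty | ⟨j, hj⟩
    · exact MBWin.win _ _ _ _ (hdom D (exists_mem_of_unhitPairs_eq_empty hempty))
    have hfull : D ∪ S ≠ Finset.univ := fun h => by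
      have hmem := h ▸ Finset.mem_univ (e (j, true))
      rw [Finset.mem_union] at hmem
      exact hmem.elim (mem_unhitPairs.mp hj true) (hS j hj true)
    refine MBWin.smove _ _ _ hfull fun v _ _ => ?_
    -- Dominator's answer `e (i, y)`: the partner of `v` if `v` lies in an unhit pair,
    -- otherwise any vertex of an unhit pair.
    obtain ⟨i, hi, y, hyv, hv⟩ : ∃ i ∈ unhitPairs e D, ∃ y, e (i, y) ≠ v ∧
        ∀ i' ∈ unhitPairs e D, i' ≠ i → ∀ x, e (i', x) ≠ v := by
      by_cases hin : ∃ i ∈ unhitPairs e D, ∃ x, e (i, x) = v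
      · obtain ⟨i, hi, x, rfl⟩ := hin
        refine ⟨i, hi, !x, by simp, fun i' _ hi' x' h => hi' ?_⟩
        exact congrArg Prod.fst (e.injective h)
      · push Not at hin
        exact ⟨j, hj, true, hin j hj true, fun i' hi' _ => hin i' hi'⟩
    refine MBWin.dmove _ _ _ (e (i, y)) (mem_unhitPairs.mp hi y) ?_ (ih _ _ ?_ ?_)
    · rw [Finset.mem_insert, not_or]
      exact ⟨hyv, hS i hi y⟩
    · rw [unhitPairs_insert, Finset.card_erase_of_mem hi]
      omega
    · intro i' hi' x
      rw [unhitPairs_insert, Finset.mem_erase] at hi'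
      rw [Finset.mem_insert, not_or]
      exact ⟨hv i' hi'.2 hi'.1 x, hS i' hi'.2 x⟩

lemma mbWin_false_card_of_pairing
    (hdom : ∀ D : Finset V, (∀ i, ∃ x, e (i, x) ∈ D) → Dominates G A D) :
    MBWin G A false (Fintype.card ι) ∅ ∅ :=
  mbWin_false_of_pairing hdom _ ∅ ∅ (Finset.card_le_univ _) fun _ _ _ => Finset.notMem_empty _

end Pairing

/-- `G_t`: the centre is `none`, and `some (i, false)`, `some (i, true)` are the two other
vertices of the `i`-th triangle. -/
def friendshipGraph (t : ℕ) : SimpleGraph (Option (Fin t × Bool)) :=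
  SimpleGraph.fromRel fun
    | some a, some b => a.1 = b.1
    | _, _ => True

namespace friendshipGraph

variable {t : ℕ}

lemma adj_none : ∀ v, v ≠ none → (friendshipGraph t).Adj none v := by
  rintro (_ | a) h
  · exact absurd rfl h
  · simp [friendshipGraph]

lemma adj_some_some {i : Fin t} {x y : Bool} (h : x ≠ y) :
    (friendshipGraph t).Adj (some (i, x)) (some (i, y)) := by
  simp [friendshipGraph, h]

lemma fst_eq_of_adj_some_some {a b : Fin t × Bool}
    (h : (friendshipGraph t).Adj (some a) (some b)) : a.1 = b.1 := by
  simp only [friendshipGraph, SimpleGraph.fromRel_adj] at h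
  simp_all [eq_comm]

lemma dominates_of_forall_exists (ht : 1 ≤ t) {D : Finset (Option (Fin t × Bool))}
    (hD : ∀ i, ∃ x, some (i, x) ∈ D) : Dominates (friendshipGraph t) ∅ D := by
  rintro (_ | ⟨i, y⟩) -
  · obtain ⟨x, hx⟩ := hD ⟨0, ht⟩
    exact ⟨_, hx, Or.inr (adj_none _ (Option.some_ne_none _)).symm⟩
  · obtain ⟨x, hx⟩ := hD i
    exact ⟨_, hx, (eq_or_ne x y).imp (congrArg _ ∘ congrArg _) adj_some_some⟩

lemma card_le_of_dominates {E : Finset (Option (Fin t × Bool))}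
    (hE : Dominates (friendshipGraph t) ∅ E) (hnone : none ∉ E) : t ≤ E.card := by
  have hmeet : ∀ i, ∃ x, some (i, x) ∈ E := fun i => by
    obtain ⟨_ | a, ha, hadj⟩ := hE (some (i, true)) (Set.notMem_empty _)
    · exact absurd ha hnone
    · have hai : a.1 = i :=
        hadj.elim (fun h => congrArg Prod.fst (Option.some_inj.mp h)) fst_eq_of_adj_some_some
      exact ⟨a.2, by rw [← hai]; exact ha⟩
  choose x hx using hmeet
  calc t = (Finset.univ : Finset (Fin t)).card := (Finset.card_fin t).symm
    _ ≤ E.card := Finset.card_le_card_of_injOn (fun i => some (i, x i)) (fun i _ => hx i)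
        fun i _ j _ h => (by simpa using h : i = j ∧ _).1

lemma dominationNumber_eq : dominationNumber (friendshipGraph t) = 1 :=
  dominationNumber_eq_one_of_forall_adj adj_none

lemma gammaMB_eq : gammaMB (friendshipGraph t) = 1 :=
  gammaMB_eq_one_of_forall_adj adj_none

lemma gammaMB'_eq (ht : 1 ≤ t) : gammaMB' (friendshipGraph t) = t := by
  refine gammaMBRes'_eq_of_isLeast ⟨?_, fun k hk => ?_⟩
  · simpa using mbWin_false_card_of_pairing (e := Function.Embedding.some)
      fun D hD => dominates_of_forall_exists ht hD
  · obtain ⟨E, hnone, hEk, hE⟩ := MBWin.exists_dominates_notMem hk none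
    exact (card_le_of_dominates hE hnone).trans hEk

end friendshipGraph

/-- For every integer `t ≥ 1`, there exists a finite simple graph `G` with `γ(G) = 1`,
`γ_MB(G) = 1`, and `γ_MB'(G) = t`. -/
theorem realization_gammaMB'_with_gamma_eq_one (t : ℕ) (ht : 1 ≤ t) :
    ∃ (W : Type) (iF : Fintype W) (iD : DecidableEq W) (G : SimpleGraph W),
      @dominationNumber W iF G = 1 ∧
      @gammaMB W iF iD G = 1 ∧
      @gammaMB' W iF iD G = (t : ℕ∞) :=
  ⟨_, inferInstance, inferInstance, friendshipGraph t, friendshipGraph.dominationNumber_eq,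
    friendshipGraph.gammaMB_eq, friendshipGraph.gammaMB'_eq ht⟩
end

section
/- Let G be a finite simple graph with γ(G) = 2. Then γ_MB(G) = γ(G) = 2 if and only if G has a vertex that lies in at least two γ-sets of G. -/
variable {V : Type*}

/-!
Every winning strategy of Dominator yields a dominating set made of his moves and avoiding
Staller's, so `γ(G) ≤ γ_MB(G)`; with `γ(G) = 2` the claim is that Dominator wins in two moves
exactly when two `γ`-sets share a vertex. If `{v, a}` and `{v, b}` are such `γ`-sets, Dominator
opens with `v` and then takes whichever of `a`, `b` Staller left. Conversely, after an opening
`v` every reply `s` of Staller must leave a `γ`-set through `v` avoiding `s`; letting `s` be the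
second vertex of one such `γ`-set produces a different one.
-/

open Finset

theorem ENat.sInf_image_natCast_eq_natCast_iff {s : Set ℕ} {n : ℕ} :
    sInf ((↑) '' s : Set ℕ∞) = n ↔ IsLeast s n := by
  rw [← (Nat.strictMono_cast (α := ℕ∞)).map_isLeast]
  refine ⟨fun h => ?_, IsLeast.csInf_eq⟩
  obtain hs | hs := ((↑) '' s : Set ℕ∞).eq_empty_or_nonempty
  · simp [hs] at h
  · exact h ▸ isLeast_csInf hs

theorem Finset.eq_pair_of_mem_of_card_eq_two {α : Type*} [DecidableEq α] {s : Finset α}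
    {a b : α} (ha : a ∈ s) (hb : b ∈ s) (hab : a ≠ b) (hs : #s = 2) : s = {a, b} :=
  (eq_of_subset_of_card_le (insert_subset ha (singleton_subset_iff.2 hb))
    (by rw [hs, card_pair hab])).symm

section

variable {G : SimpleGraph V} {A : Set V}

theorem dominationNumber_le_card [Fintype V] {D : Finset V} (hD : Dominates G ∅ D) :
    dominationNumber G ≤ #D :=
  Nat.sInf_le ⟨D, hD, rfl⟩

variable [Fintype V] [DecidableEq V]

theorem MBWin.exists_dominates {t : Bool} {k : ℕ} {D S : Finset V} (h : MBWin G A t k D S) :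
    ∃ E : Finset V, Disjoint E S ∧ #E ≤ k ∧ Dominates G A (D ∪ E) := by
  induction h with
  | win t k D S hD => exact ⟨∅, disjoint_empty_left S, by simp, by simpa⟩
  | dmove k D S v _ hvS _ ih =>
    obtain ⟨E, hES, hE, hDE⟩ := ih
    refine ⟨insert v E, disjoint_insert_left.2 ⟨hvS, hES⟩,
      (card_insert_le v E).trans (by omega), ?_⟩
    rwa [union_insert, ← insert_union]
  | smove k D S hne _ ih =>
    obtain ⟨u, -, hu⟩ := exists_of_ssubset (ssubset_univ_iff.2 hne)
    rw [mem_union, not_or] at hu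
    obtain ⟨E, hES, hE, hDE⟩ := ih u hu.1 hu.2
    exact ⟨E, hES.mono_right (subset_insert u S), hE, hDE⟩

theorem MBWin.dominationNumber_le {t : Bool} {k : ℕ} {D S : Finset V}
    (h : MBWin G ∅ t k D S) : dominationNumber G ≤ #D + k := by
  obtain ⟨E, -, hE, hDE⟩ := h.exists_dominates
  exact (dominationNumber_le_card hDE).trans ((card_union_le D E).trans (by omega))

theorem MBWin.one_of_dominating_pair {v s : V} {D : Finset V} (hD : Dominates G A D)
    (hcard : #D = 2) (hv : v ∈ D) (hs : s ∉ D) : MBWin G A true 1 {v} {s} := by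
  obtain ⟨a, ha, hav⟩ := exists_mem_ne (by omega : 1 < #D) v
  refine .dmove 0 _ _ a (by simpa using hav) (fun h => hs (mem_singleton.1 h ▸ ha))
    (.win _ _ _ _ ?_)
  rwa [pair_comm, ← eq_pair_of_mem_of_card_eq_two hv ha hav.symm hcard]

theorem MBWin.two_of_dominating_pairs {v : V} {D₁ D₂ : Finset V} (hne : D₁ ≠ D₂)
    (hD₁ : Dominates G A D₁ ∧ #D₁ = 2) (hD₂ : Dominates G A D₂ ∧ #D₂ = 2)
    (hv₁ : v ∈ D₁) (hv₂ : v ∈ D₂) : MBWin G A true 2 ∅ ∅ := by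
  refine .dmove 1 ∅ ∅ v (notMem_empty v) (notMem_empty v) (.smove 1 _ _ ?_ fun s hsv _ => ?_)
  · obtain ⟨a, ha, hav⟩ := exists_mem_ne (by omega : 1 < #D₁) v
    intro h
    have ha' : a ∈ insert v ∅ ∪ ∅ := h ▸ mem_univ a
    simp [hav] at ha'
  · rw [insert_empty, insert_empty]
    have hsv : s ≠ v := by simpa using hsv
    by_cases hs₁ : s ∈ D₁
    · refine one_of_dominating_pair hD₂.1 hD₂.2 hv₂ fun hs₂ => hne ?_
      rw [eq_pair_of_mem_of_card_eq_two hv₁ hs₁ hsv.symm hD₁.2,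
        eq_pair_of_mem_of_card_eq_two hv₂ hs₂ hsv.symm hD₂.2]
    · exact one_of_dominating_pair hD₁.1 hD₁.2 hv₁ hs₁

theorem MBWin.exists_dominating_pairs_of_two (hγ : ∀ D : Finset V, Dominates G A D → 2 ≤ #D)
    (h : MBWin G A true 2 ∅ ∅) :
    ∃ (v : V) (D₁ D₂ : Finset V), D₁ ≠ D₂ ∧ (Dominates G A D₁ ∧ #D₁ = 2) ∧
      (Dominates G A D₂ ∧ #D₂ = 2) ∧ v ∈ D₁ ∧ v ∈ D₂ := by
  cases h with
  | win _ _ _ _ hD => exact absurd (hγ ∅ hD) (by simp)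
  | dmove _ _ _ v _ _ h =>
    cases h with
    | win _ _ _ _ hD => exact absurd (hγ _ hD) (by simp)
    | smove _ _ _ hne hall =>
      have avoid : ∀ s, s ≠ v → ∃ D : Finset V, (Dominates G A D ∧ #D = 2) ∧ v ∈ D ∧ s ∉ D := by
        intro s hsv
        obtain ⟨E, hEs, hE, hDE⟩ := (hall s (by simpa using hsv) (notMem_empty s)).exists_dominates
        refine ⟨_, ⟨hDE, le_antisymm ?_ (hγ _ hDE)⟩, by simp, ?_⟩
        · exact (card_union_le _ _).trans (by rw [insert_empty, card_singleton]; omega)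
        · simpa [hsv] using disjoint_left.1 hEs.symm (mem_insert_self s ∅)
      obtain ⟨s, -, hs⟩ := exists_of_ssubset (ssubset_univ_iff.2 hne)
      obtain ⟨D₁, hD₁, hv₁, -⟩ := avoid s (by simpa using hs)
      obtain ⟨w, hw, hwv⟩ := exists_mem_ne (by omega : 1 < #D₁) v
      obtain ⟨D₂, hD₂, hv₂, hw₂⟩ := avoid w hwv
      exact ⟨v, D₁, D₂, fun h => hw₂ (h ▸ hw), hD₁, hD₂, hv₁, hv₂⟩

end

/-- Let `G` be a finite simple graph with `γ(G) = 2`.  Then `γ_MB(G) = γ(G) = 2` if and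
only if `G` has a vertex that lies in at least two `γ`-sets of `G`. -/
theorem gammaMB_eq_two_iff [Fintype V] [DecidableEq V] (G : SimpleGraph V)
    (h : dominationNumber G = 2) :
    gammaMB G = 2 ↔
      ∃ (v : V) (D₁ D₂ : Finset V), D₁ ≠ D₂ ∧ IsGammaSet G D₁ ∧ IsGammaSet G D₂ ∧
        v ∈ D₁ ∧ v ∈ D₂ := by
  have hγ : ∀ D : Finset V, Dominates G ∅ D → 2 ≤ #D := fun D hD =>
    h ▸ dominationNumber_le_card hD
  have hlower : 2 ∈ lowerBounds {m | MBWin G ∅ true m ∅ ∅} := fun m hm => by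
    simpa [h] using hm.dominationNumber_le
  simp only [IsGammaSet, h]
  refine (ENat.sInf_image_natCast_eq_natCast_iff (n := 2)).trans
    ⟨fun hwin => hwin.1.exists_dominating_pairs_of_two hγ, ?_⟩
  rintro ⟨v, D₁, D₂, hne, hD₁, hD₂, hv₁, hv₂⟩
  exact ⟨.two_of_dominating_pairs hne hD₁ hD₂ hv₁ hv₂, hlower⟩
end

section
/- Let G be a finite simple graph and R(G) a residual graph of G. Then G has a perfect matching if and only if R(G) has a perfect matching. -/
variable {V : Type*}

/-- `PendantStep G s t`: the induced subgraph of `G` on `t` is obtained from the induced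
subgraph of `G` on `s` by removing a pendant `P₂` (a path `xy` on two vertices attached to
the rest of the graph by exactly one edge, so that `x` is a leaf and `y` has degree `2`),
or by removing the entire remaining graph when it is a single `P₂`. -/
def PendantStep [DecidableEq V] (G : SimpleGraph V) (s t : Finset V) : Prop :=
  (∃ x ∈ s, ∃ y ∈ s, G.Adj x y ∧
      (∀ w ∈ s, G.Adj x w → w = y) ∧
      (∃ z ∈ s, z ≠ x ∧ G.Adj y z ∧ ∀ w ∈ s, G.Adj y w → w = x ∨ w = z) ∧
      t = (s.erase x).erase y) ∨
  (∃ x ∈ s, ∃ y ∈ s, G.Adj x y ∧ s = {x, y} ∧ t = ∅)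

/-- `s` is the vertex set of a residual graph `R(G)` of `G`: it is obtained from the full
vertex set by iteratively removing pendant `P₂`'s until no such removal is possible. -/
def IsResidualSet [Fintype V] [DecidableEq V] (G : SimpleGraph V) (s : Finset V) : Prop :=
  Relation.ReflTransGen (PendantStep G) Finset.univ s ∧ ∀ t, ¬ PendantStep G s t

/-! A vertex `x` whose only neighbour is `y` must be matched to `y` by any perfect matching,
so deleting `x` and `y` turns perfect matchings of `G` into perfect matchings of `G - {x, y}`
and back. Each removal of a pendant `P₂` (or of a remaining single `P₂`) is of this kind, so
perfect matchings survive, in both directions, all the way down to `R(G)`. -/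

namespace SimpleGraph

variable {W : Type*} {G : SimpleGraph V} {M : G.Subgraph} {x y : V}

namespace Subgraph

lemma IsMatching.comap {G' : SimpleGraph W} {M : G'.Subgraph} (f : G ↪g G')
    (hM : M.IsMatching) (hrange : M.verts ⊆ Set.range f) : (M.comap f.toHom).IsMatching := by
  intro v hv
  obtain ⟨w', hvw', hunique⟩ := hM hv
  obtain ⟨w, rfl⟩ := hrange (M.edge_vert hvw'.symm)
  refine ⟨w, ⟨f.map_adj_iff.mp (M.adj_sub hvw'), hvw'⟩, fun u hu => f.injective ?_⟩
  exact hunique (f u) hu.2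

lemma IsMatching.deleteVerts_pair (hM : M.IsMatching) (hxy : M.Adj x y) :
    (M.deleteVerts {x, y}).IsMatching := by
  rintro v ⟨hv, hvxy⟩
  obtain ⟨w, hvw, hunique⟩ := hM hv
  have hwxy : w ∉ ({x, y} : Set V) := by
    rintro (rfl | rfl)
    · exact hvxy (.inr (hM.eq_of_adj_left hvw.symm hxy))
    · exact hvxy (.inl (hM.eq_of_adj_right hvw hxy))
  exact ⟨w, deleteVerts_adj.mpr ⟨hv, hvxy, M.edge_vert hvw.symm, hwxy, hvw⟩,
    fun u hu => hunique u (deleteVerts_adj.mp hu).2.2.2.2⟩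

lemma IsMatching.sup_subgraphOfAdj (hM : M.IsMatching) (hxy : G.Adj x y)
    (hx : x ∉ M.verts) (hy : y ∉ M.verts) : (M ⊔ G.subgraphOfAdj hxy).IsMatching := by
  refine hM.sup (.subgraphOfAdj hxy) ?_
  rw [hM.support_eq_verts, (IsMatching.subgraphOfAdj hxy).support_eq_verts,
    subgraphOfAdj_verts, Set.disjoint_right]
  rintro v (rfl | rfl) <;> assumption

end Subgraph

def IsPerfectlyMatchable (G : SimpleGraph V) (s : Set V) : Prop :=
  ∃ M : G.Subgraph, M.verts = s ∧ M.IsMatching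

lemma isPerfectlyMatchable_univ_iff :
    G.IsPerfectlyMatchable Set.univ ↔ ∃ M : G.Subgraph, M.IsPerfectMatching := by
  simp only [IsPerfectlyMatchable, Subgraph.IsPerfectMatching, Subgraph.isSpanning_iff]
  exact exists_congr fun M => and_comm

lemma isPerfectlyMatchable_iff_exists_isPerfectMatching_induce {s : Set V} :
    G.IsPerfectlyMatchable s ↔ ∃ M : (G.induce s).Subgraph, M.IsPerfectMatching := by
  constructor
  · rintro ⟨M, rfl, hM⟩
    exact ⟨M.comap (Embedding.induce M.verts).toHom,
      hM.comap _ fun v hv => ⟨⟨v, hv⟩, rfl⟩, fun v => v.2⟩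
  · rintro ⟨M, hM, hspan⟩
    refine ⟨M.map (Embedding.induce s).toHom, ?_,
      hM.map _ (Embedding.induce (G := G) s).injective⟩
    rw [Subgraph.map_verts, hspan.verts_eq_univ, Set.image_univ]
    exact Subtype.range_coe

theorem isPerfectlyMatchable_iff_diff_of_forall_adj_eq {s : Set V} (hx : x ∈ s) (hy : y ∈ s)
    (hxy : G.Adj x y) (hleaf : ∀ w ∈ s, G.Adj x w → w = y) :
    G.IsPerfectlyMatchable s ↔ G.IsPerfectlyMatchable (s \ {x, y}) := by
  constructor
  · rintro ⟨M, rfl, hM⟩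
    obtain ⟨w, hxw, -⟩ := hM hx
    obtain rfl : y = w := (hleaf w (M.edge_vert hxw.symm) (M.adj_sub hxw)).symm
    exact ⟨M.deleteVerts {x, y}, Subgraph.deleteVerts_verts, hM.deleteVerts_pair hxw⟩
  · rintro ⟨M, hverts, hM⟩
    refine ⟨M ⊔ G.subgraphOfAdj hxy, ?_, hM.sup_subgraphOfAdj hxy ?_ ?_⟩
    · rw [Subgraph.verts_sup, subgraphOfAdj_verts, hverts, Set.sdiff_union_of_subset]
      exact Set.insert_subset hx (Set.singleton_subset_iff.mpr hy)
    all_goals simp [hverts]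

theorem PendantStep.isPerfectlyMatchable_iff [DecidableEq V] {s t : Finset V}
    (h : PendantStep G s t) : G.IsPerfectlyMatchable s ↔ G.IsPerfectlyMatchable t := by
  rcases h with ⟨x, hx, y, hy, hxy, hleaf, -, rfl⟩ | ⟨x, hx, y, hy, hxy, rfl, rfl⟩
  · rw [Finset.coe_erase, Finset.coe_erase, Set.sdiff_sdiff, ← Set.insert_eq]
    exact isPerfectlyMatchable_iff_diff_of_forall_adj_eq hx hy hxy hleaf
  · have hleaf : ∀ w ∈ ({x, y} : Set V), G.Adj x w → w = y := by
      rintro w (rfl | rfl) hxw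
      · exact absurd hxw (G.irrefl)
      · rfl
    simpa using isPerfectlyMatchable_iff_diff_of_forall_adj_eq (by simp) (by simp) hxy hleaf

end SimpleGraph

open SimpleGraph in
/-- Let `G` be a finite simple graph and `R(G)` a residual graph of `G`.  Then `G` has a
perfect matching if and only if `R(G)` has a perfect matching. -/
theorem perfect_matching_iff_residual_perfect_matching [Fintype V] [DecidableEq V]
    (G : SimpleGraph V) (s : Finset V) (hs : IsResidualSet G s) :
    (∃ M : G.Subgraph, M.IsPerfectMatching) ↔
      ∃ M : (G.induce (↑s : Set V)).Subgraph, M.IsPerfectMatching := by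
  rw [← isPerfectlyMatchable_univ_iff,
    ← isPerfectlyMatchable_iff_exists_isPerfectMatching_induce]
  have hsteps : G.IsPerfectlyMatchable (Finset.univ : Finset V) ↔ G.IsPerfectlyMatchable s := by
    obtain ⟨hreach, -⟩ := hs
    induction hreach with
    | refl => rfl
    | tail _ hstep ih => exact ih.trans hstep.isPerfectlyMatchable_iff
  simpa using hsteps
end

section
/- Let G be a finite simple graph, R(G) a residual graph of G, and H = G − V(R(G)). Then n(H)/2 + γ_MB(R(G)) − 1 ≤ γ_MB(G) ≤ n(H)/2 + γ_MB(R(G)), with the convention that both bounds are ∞ when γ_MB(R(G)) = ∞. -/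
variable {V : Type*}

/-!
Both bounds are proved one pendant `P₂` at a time, for the game played on a shrinking board
`s ⊆ V`. Let `xy` be a pendant `P₂` of `G[s]` with leaf `x`, attached at `z`.

For the upper bound Dominator follows his strategy on `s \ {x, y}` and answers a move on `x`
or `y` with the other vertex, which costs him at most one extra move.

For the lower bound Staller selects `y`; Dominator is then forced to take the leaf `x`, and the
game continues on `s \ {x, y}` one Dominator move later. If instead Dominator selects `y`
himself, `x` is dead and `z` is dominated for free: what remains is the S-game on `s \ {x, y}`
with `z` counting as dominated. Such a game costs Dominator at most one move more than the
D-game, and the class "D-game, or S-game with one vertex already dominated" is preserved by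
every removal at the price of exactly one move, so that extra move is lost only once.
-/

def DominatesOn (G : SimpleGraph V) (B : Finset V) (A : Set V) (D : Finset V) : Prop :=
  ∀ v ∈ B, v ∉ A → ∃ u ∈ D, u = v ∨ G.Adj u v

/-- `MBWin` with both the moves and the vertices to be dominated restricted to the board `B`. -/
inductive MBWinOn [DecidableEq V] (G : SimpleGraph V) (B : Finset V) (A : Set V) :
    Bool → ℕ → Finset V → Finset V → Prop
  | win (t : Bool) (k : ℕ) (D S : Finset V) : DominatesOn G B A D → MBWinOn G B A t k D S
  | dmove (k : ℕ) (D S : Finset V) (v : V) : v ∈ B → v ∉ D → v ∉ S →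
      MBWinOn G B A false k (insert v D) S → MBWinOn G B A true (k + 1) D S
  | smove (k : ℕ) (D S : Finset V) : (∃ v ∈ B, v ∉ D ∧ v ∉ S) →
      (∀ v ∈ B, v ∉ D → v ∉ S → MBWinOn G B A true k D (insert v S)) →
      MBWinOn G B A false k D S

section Board

variable {G : SimpleGraph V} {B : Finset V} {A : Set V} {D S : Finset V}

theorem DominatesOn.mono {D' : Finset V} (h : DominatesOn G B A D) (hD : D ⊆ D') :
    DominatesOn G B A D' := fun v hv hvA =>
  let ⟨u, hu, huv⟩ := h v hv hvA
  ⟨u, hD hu, huv⟩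

theorem not_dominatesOn_empty {v : V} (hv : v ∈ B) (hvA : v ∉ A) :
    ¬ DominatesOn G B A ∅ := fun h => by
  obtain ⟨u, hu, -⟩ := h v hv hvA
  exact Finset.notMem_empty u hu

theorem dominatesOn_empty_board : DominatesOn G ∅ A D := fun v hv =>
  absurd hv (Finset.notMem_empty v)

variable [DecidableEq V] {t : Bool} {k : ℕ}

theorem DominatesOn.insert_of_adj {x y : V} (hxy : G.Adj x y)
    (h : DominatesOn G ((B.erase x).erase y) A D) : DominatesOn G B A (insert x D) := by
  intro v hvB hvA
  by_cases hvx : v = x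
  · exact ⟨x, Finset.mem_insert_self _ _, Or.inl hvx.symm⟩
  by_cases hvy : v = y
  · exact ⟨x, Finset.mem_insert_self _ _, Or.inr (hvy ▸ hxy)⟩
  obtain ⟨u, hu, huv⟩ := h v (by simp [hvx, hvy, hvB]) hvA
  exact ⟨u, Finset.mem_insert_of_mem hu, huv⟩

namespace MBWinOn

theorem succ (h : MBWinOn G B A t k D S) : MBWinOn G B A t (k + 1) D S := by
  induction h with
  | win t k D S hd => exact .win _ _ _ _ hd
  | dmove k D S v hvB hvD hvS _ ih => exact .dmove _ _ _ v hvB hvD hvS ih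
  | smove k D S hex _ ih => exact .smove _ _ _ hex ih

theorem anti_staller {S' : Finset V} (h : MBWinOn G B A t k D S) (hS : S' ⊆ S) :
    MBWinOn G B A t k D S' := by
  induction h generalizing S' with
  | win t k D S hd => exact .win _ _ _ _ hd
  | dmove k D S v hvB hvD hvS _ ih => exact .dmove _ _ _ v hvB hvD (fun h => hvS (hS h)) (ih hS)
  | smove k D S hex hch ih =>
    obtain ⟨u, huB, huD, huS⟩ := hex
    refine .smove _ _ _ ⟨u, huB, huD, fun h => huS (hS h)⟩ fun v hvB hvD hvS' => ?_
    by_cases hvS : v ∈ S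
    · -- Staller's move `v` is already hers in the larger position; let her play `u` there.
      exact ih u huB huD huS (Finset.insert_subset (Finset.mem_insert_of_mem hvS)
        (hS.trans (Finset.subset_insert _ _)))
    · exact ih v hvB hvD hvS (Finset.insert_subset_insert _ hS)

theorem true_of_false (h : MBWinOn G B A false k D S) : MBWinOn G B A true k D S := by
  cases h with
  | win _ _ _ _ hd => exact .win _ _ _ _ hd
  | smove _ _ _ hex hch =>
    obtain ⟨u, huB, huD, huS⟩ := hex
    exact (hch u huB huD huS).anti_staller (Finset.subset_insert _ _)

theorem dominatesOn_of_zero (h : MBWinOn G B A t 0 D S) : DominatesOn G B A D := by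
  cases h with
  | win _ _ _ _ hd => exact hd
  | smove _ _ _ hex hch =>
    obtain ⟨u, huB, huD, huS⟩ := hex
    cases hch u huB huD huS with
    | win _ _ _ _ hd => exact hd

theorem dominatesOn_of_full (h : MBWinOn G B A true k D S) (hfull : ∀ v ∈ B, v ∈ D ∨ v ∈ S) :
    DominatesOn G B A D := by
  cases h with
  | win _ _ _ _ hd => exact hd
  | dmove _ _ _ v hvB hvD hvS _ => exact ((hfull v hvB).elim hvD hvS).elim

theorem staller_move (h : MBWinOn G B A false k D S) {v : V} (hvB : v ∈ B) (hvD : v ∉ D)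
    (hvS : v ∉ S) : MBWinOn G B A true k D (insert v S) := by
  cases h with
  | win _ _ _ _ hd => exact .win _ _ _ _ hd
  | smove _ _ _ _ hch => exact hch v hvB hvD hvS

theorem exists_dominator_move (h : MBWinOn G B A true k D S) (hD : ¬ DominatesOn G B A D) :
    ∃ k' u, k = k' + 1 ∧ u ∈ B ∧ u ∉ D ∧ u ∉ S ∧ MBWinOn G B A false k' (insert u D) S := by
  cases h with
  | win _ _ _ _ hd => exact (hD hd).elim
  | dmove k' _ _ u huB huD huS h' => exact ⟨k', u, rfl, huB, huD, huS, h'⟩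

theorem insert_dominator_and_skip (h : MBWinOn G B A t k D S) :
    (∀ w ∉ S, MBWinOn G B A t k (insert w D) S) ∧
      (t = false → MBWinOn G B A true (k + 1) D S) := by
  induction h with
  | win t k D S hd =>
    exact ⟨fun _ _ => .win _ _ _ _ (hd.mono (Finset.subset_insert _ _)), fun _ => .win _ _ _ _ hd⟩
  | dmove k D S v hvB hvD hvS _ ih =>
    refine ⟨fun w hwS => ?_, nofun⟩
    by_cases hwv : w = v
    · -- the extra stone is the one Dominator selects next, so he passes instead
      subst hwv
      exact ih.2 rfl
    · refine .dmove _ _ _ v hvB (by simp [Ne.symm hwv, hvD]) hvS ?_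
      simpa only [Finset.insert_comm] using ih.1 w hwS
  | smove k D S hex hch ih =>
    have insert_dominator : ∀ w ∉ S, MBWinOn G B A false k (insert w D) S := by
      intro w hwS
      by_cases hfree : ∃ u ∈ B, u ∉ insert w D ∧ u ∉ S
      · refine .smove _ _ _ hfree fun v hvB hvwD hvS => ?_
        rw [Finset.mem_insert, not_or] at hvwD
        exact (ih v hvB hvwD.2 hvS).1 w (by simp [Ne.symm hvwD.1, hwS])
      · -- `w` was the last free vertex, so Staller's reply there fills the board.
        push Not at hfree
        obtain ⟨u, huB, huD, huS⟩ := hex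
        have huw : u = w := by
          by_contra hne
          exact huS (hfree u huB (by simp [hne, huD]))
        subst huw
        have hfull : ∀ v ∈ B, v ∈ D ∨ v ∈ insert u S := by
          intro v hvB
          by_cases hvu : v = u
          · exact Or.inr (hvu ▸ Finset.mem_insert_self _ _)
          by_cases hvD : v ∈ D
          · exact Or.inl hvD
          · exact Or.inr (Finset.mem_insert_of_mem (hfree v hvB (by simp [hvu, hvD])))
        exact .win _ _ _ _ (((hch u huB huD huS).dominatesOn_of_full hfull).mono
          (Finset.subset_insert _ _))
    refine ⟨insert_dominator, fun _ => ?_⟩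
    obtain ⟨u, huB, huD, huS⟩ := hex
    exact .dmove _ _ _ u huB huD huS (insert_dominator u huS)

theorem insert_dominator (h : MBWinOn G B A t k D S) {w : V} (hwS : w ∉ S) :
    MBWinOn G B A t k (insert w D) S :=
  h.insert_dominator_and_skip.1 w hwS

theorem skip (h : MBWinOn G B A false k D S) : MBWinOn G B A true (k + 1) D S :=
  h.insert_dominator_and_skip.2 rfl

theorem change_exempt (h : MBWinOn G B A t k D S) {A' : Set V}
    (hA : ∀ v ∈ B, v ∈ A → v ∉ A' → ∃ u ∈ D, u = v ∨ G.Adj u v) :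
    MBWinOn G B A' t k D S := by
  induction h with
  | win t k D S hd =>
    refine .win _ _ _ _ fun v hvB hvA' => ?_
    by_cases hvA : v ∈ A
    · exact hA v hvB hvA hvA'
    · exact hd v hvB hvA
  | dmove k D S v hvB hvD hvS _ ih =>
    refine .dmove _ _ _ v hvB hvD hvS (ih fun w hwB hwA hwA' => ?_)
    obtain ⟨u, hu, huw⟩ := hA w hwB hwA hwA'
    exact ⟨u, Finset.mem_insert_of_mem hu, huw⟩
  | smove k D S hex _ ih => exact .smove _ _ _ hex fun v hvB hvD hvS => ih v hvB hvD hvS hA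

theorem exempt_empty_of_notMem {z : V} (h : MBWinOn G B {z} t k D S) (hz : z ∉ B) :
    MBWinOn G B ∅ t k D S :=
  h.change_exempt fun _ hvB hvz => absurd (Set.mem_singleton_iff.mp hvz ▸ hvB) hz

theorem erase_staller (h : MBWinOn G B A t k D S) {y : V} (hy : y ∈ S) :
    MBWinOn G (B.erase y) A t k D S := by
  induction h with
  | win t k D S hd => exact .win _ _ _ _ fun v hv hvA => hd v (Finset.mem_of_mem_erase hv) hvA
  | dmove k D S v hvB hvD hvS _ ih =>
    exact .dmove _ _ _ v (Finset.mem_erase.mpr ⟨fun h => hvS (h ▸ hy), hvB⟩) hvD hvS (ih hy)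
  | smove k D S hex _ ih =>
    obtain ⟨u, huB, huD, huS⟩ := hex
    refine .smove _ _ _ ⟨u, Finset.mem_erase.mpr ⟨fun h => huS (h ▸ hy), huB⟩, huD, huS⟩ ?_
    exact fun v hv hvD hvS => ih v (Finset.mem_of_mem_erase hv) hvD hvS
      (Finset.mem_insert_of_mem hy)

theorem erase_dominator (h : MBWinOn G B A t k D S) {y : V} (hy : y ∈ D) :
    MBWinOn G (B.erase y) (A ∪ {w | y = w ∨ G.Adj y w}) t k (D.erase y) S := by
  induction h with
  | win t k D S hd =>
    refine .win _ _ _ _ fun v hv hvA => ?_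
    rw [Set.mem_union, not_or] at hvA
    obtain ⟨u, huD, huv⟩ := hd v (Finset.mem_of_mem_erase hv) hvA.1
    exact ⟨u, Finset.mem_erase.mpr ⟨fun h => hvA.2 (h ▸ huv), huD⟩, huv⟩
  | dmove k D S v hvB hvD hvS _ ih =>
    have hvy : v ≠ y := fun h => hvD (h ▸ hy)
    refine .dmove _ _ _ v (Finset.mem_erase.mpr ⟨hvy, hvB⟩)
      (fun h => hvD (Finset.mem_of_mem_erase h)) hvS ?_
    simpa only [Finset.erase_insert_of_ne hvy] using ih (Finset.mem_insert_of_mem hy)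
  | smove k D S hex _ ih =>
    obtain ⟨u, huB, huD, huS⟩ := hex
    refine .smove _ _ _ ⟨u, Finset.mem_erase.mpr ⟨fun h => huD (h ▸ hy), huB⟩,
      fun h => huD (Finset.mem_of_mem_erase h), huS⟩ fun v hv hvD hvS => ?_
    exact ih v (Finset.mem_of_mem_erase hv)
      (fun h => hvD (Finset.mem_erase.mpr ⟨Finset.ne_of_mem_erase hv, h⟩)) hvS hy

/-- If Dominator's strategy selects `x`, he passes instead. -/
theorem erase_dead {x : V} (h : MBWinOn G B A t k D S) (hxD : x ∉ D) (hxS : x ∉ S)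
    (hdead : ∀ w ∈ B, G.Adj x w → w ∈ A ∨ ∃ u ∈ D, u = w ∨ G.Adj u w) :
    MBWinOn G (B.erase x) A t k D S := by
  induction h with
  | win t k D S hd => exact .win _ _ _ _ fun v hv hvA => hd v (Finset.mem_of_mem_erase hv) hvA
  | dmove k D S v hvB hvD hvS h' ih =>
    by_cases hvx : v = x
    · subst hvx
      have h1 := h'.erase_dominator (Finset.mem_insert_self v D)
      rw [Finset.erase_insert hvD] at h1
      refine skip (h1.change_exempt fun w hw hwA' hwA => ?_)
      rcases hwA' with hwA' | rfl | hvw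
      · exact absurd hwA' hwA
      · exact absurd rfl (Finset.ne_of_mem_erase hw)
      · exact (hdead w (Finset.mem_of_mem_erase hw) hvw).resolve_left hwA
    · refine .dmove _ _ _ v (Finset.mem_erase.mpr ⟨hvx, hvB⟩) hvD hvS (ih ?_ hxS ?_)
      · simp [Ne.symm hvx, hxD]
      · intro w hwB hxw
        rcases hdead w hwB hxw with hwA | ⟨u, hu, huw⟩
        · exact Or.inl hwA
        · exact Or.inr ⟨u, Finset.mem_insert_of_mem hu, huw⟩
  | smove k D S hex hch ih =>
    by_cases hfree : ∃ u ∈ B.erase x, u ∉ D ∧ u ∉ S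
    · refine .smove _ _ _ hfree fun v hv hvD hvS => ?_
      exact ih v (Finset.mem_of_mem_erase hv) hvD hvS hxD
        (by simp [Ne.symm (Finset.ne_of_mem_erase hv), hxS]) hdead
    · -- `x` is the only free vertex, and Staller's move there fills the board.
      push Not at hfree
      obtain ⟨u, huB, huD, huS⟩ := hex
      have hux : u = x := by
        by_contra hux
        exact huS (hfree u (Finset.mem_erase.mpr ⟨hux, huB⟩) huD)
      refine .win _ _ _ _ fun v hv hvA => (hch u huB huD huS).dominatesOn_of_full
        (fun w hwB => ?_) v (Finset.mem_of_mem_erase hv) hvA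
      by_cases hwx : w = x
      · exact Or.inr (hwx ▸ hux ▸ Finset.mem_insert_self _ _)
      by_cases hwD : w ∈ D
      · exact Or.inl hwD
      · exact Or.inr (Finset.mem_insert_of_mem (hfree w (Finset.mem_erase.mpr ⟨hwx, hwB⟩) hwD))

theorem false_of_isolated {p : V} (h : MBWinOn G B A t k D S) (hpB : p ∈ B) (hpA : p ∉ A)
    (hD : ∀ u ∈ D, ¬ (u = p ∨ G.Adj u p)) (hS : ∀ u ∈ B, (u = p ∨ G.Adj u p) → u ∈ S) :
    False := by
  induction h with
  | win t k D S hd =>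
    obtain ⟨u, hu, hup⟩ := hd p hpB hpA
    exact hD u hu hup
  | dmove k D S v hvB _ hvS _ ih =>
    refine ih (fun u hu hup => ?_) hS
    rcases Finset.mem_insert.mp hu with rfl | hu
    · exact hvS (hS u hvB hup)
    · exact hD u hu hup
  | smove k D S hex _ ih =>
    obtain ⟨u, huB, huD, huS⟩ := hex
    exact ih u huB huD huS hD fun w hwB hwp => Finset.mem_insert_of_mem (hS w hwB hwp)

theorem forced_reply {p c : V} (h : MBWinOn G B A true k D S) (hpB : p ∈ B) (hpA : p ∉ A)
    (hcB : c ∈ B) (hcS : c ∉ S) (hcp : c = p ∨ G.Adj c p)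
    (hD : ∀ u ∈ D, ¬ (u = p ∨ G.Adj u p)) (hS : ∀ u ∈ B, (u = p ∨ G.Adj u p) → u = c ∨ u ∈ S) :
    ∃ k', k = k' + 1 ∧ MBWinOn G B A false k' (insert c D) S := by
  cases h with
  | win _ _ _ _ hd =>
    obtain ⟨u, hu, hup⟩ := hd p hpB hpA
    exact (hD u hu hup).elim
  | dmove k' _ _ u huB huD huS h' =>
    by_cases huc : u = c
    · exact ⟨k', rfl, huc ▸ h'⟩
    refine ((h'.staller_move hcB ?_ hcS).false_of_isolated hpB hpA ?_ ?_).elim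
    · rw [Finset.mem_insert, not_or]
      exact ⟨Ne.symm huc, fun hc => hD c hc hcp⟩
    · intro w hw hwp
      rcases Finset.mem_insert.mp hw with rfl | hw
      · exact (hS w huB hwp).elim huc huS
      · exact hD w hw hwp
    · intro w hwB hwp
      rcases hS w hwB hwp with rfl | hwS
      · exact Finset.mem_insert_self _ _
      · exact Finset.mem_insert_of_mem hwS

theorem erase_leaf_pair {s : Finset V} {x y : V} (h : MBWinOn G s A t k D S)
    (hleaf : ∀ w ∈ s, G.Adj x w → w = y) (hxD : x ∈ D) (hyS : y ∈ S) :
    MBWinOn G ((s.erase x).erase y) A t k (D.erase x) S := by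
  refine ((h.erase_dominator hxD).erase_staller hyS).change_exempt ?_
  rintro v hv (hvA | rfl | hxv) hvA'
  · exact absurd hvA hvA'
  · simp at hv
  · obtain ⟨hvy, hvx, hvs⟩ : v ≠ y ∧ v ≠ x ∧ v ∈ s := by simpa using hv
    exact absurd (hleaf v hvs hxv) hvy

theorem insert_insert_of_adj {x y : V} (hxy : G.Adj x y)
    (h : MBWinOn G ((B.erase x).erase y) A t k D S) :
    MBWinOn G B A t k (insert x D) (insert y S) := by
  induction h with
  | win t k D S hd => exact .win _ _ _ _ (hd.insert_of_adj hxy)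
  | dmove k D S v hv hvD hvS _ ih =>
    obtain ⟨hvy, hvx, hvB⟩ : v ≠ y ∧ v ≠ x ∧ v ∈ B := by simpa using hv
    refine .dmove _ _ _ v hvB (by simp [hvx, hvD]) (by simp [hvy, hvS]) ?_
    rwa [Finset.insert_comm]
  | smove k D S hex _ ih =>
    obtain ⟨u, hu, huD, huS⟩ := hex
    obtain ⟨huy, hux, huB⟩ : u ≠ y ∧ u ≠ x ∧ u ∈ B := by simpa using hu
    refine .smove _ _ _ ⟨u, huB, by simp [hux, huD], by simp [huy, huS]⟩ fun v hvB hvD hvS => ?_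
    rw [Finset.mem_insert, not_or] at hvD hvS
    rw [Finset.insert_comm]
    exact ih v (by simp [hvD.1, hvS.1, hvB]) hvD.2 hvS.2

/-- The pairing strategy: Dominator answers a move on `x` or `y` with the other endpoint. -/
theorem succ_of_erase_edge {x y : V} (hxB : x ∈ B) (hyB : y ∈ B) (hxy : G.Adj x y)
    (h : MBWinOn G ((B.erase x).erase y) A t k D S) (hxD : x ∉ D) (hxS : x ∉ S)
    (hyD : y ∉ D) (hyS : y ∉ S) : MBWinOn G B A t (k + 1) D S := by
  have hyx : (B.erase y).erase x = (B.erase x).erase y := Finset.erase_right_comm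
  induction h with
  | win t k D S hd =>
    have hwin : MBWinOn G B A false k (insert x D) S := .win _ _ _ _ (hd.insert_of_adj hxy)
    cases t with
    | true => exact .dmove _ _ _ x hxB hxD hxS hwin
    | false =>
      refine .smove _ _ _ ⟨x, hxB, hxD, hxS⟩ fun v _ _ _ => ?_
      by_cases hvx : v = x
      · subst hvx
        exact .dmove _ _ _ y hyB hyD (by simp [hxy.ne', hyS])
          (.win _ _ _ _ ((hyx ▸ hd).insert_of_adj hxy.symm))
      · exact .dmove _ _ _ x hxB hxD (by simp [Ne.symm hvx, hxS])
          (.win _ _ _ _ (hd.insert_of_adj hxy))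
  | dmove k D S v hv hvD hvS _ ih =>
    obtain ⟨hvy, hvx, hvB⟩ : v ≠ y ∧ v ≠ x ∧ v ∈ B := by simpa using hv
    exact .dmove _ _ _ v hvB hvD hvS
      (ih (by simp [Ne.symm hvx, hxD]) hxS (by simp [Ne.symm hvy, hyD]) hyS)
  | smove k D S hex hch ih =>
    have hnode : MBWinOn G ((B.erase x).erase y) A false k D S := .smove _ _ _ hex hch
    obtain ⟨u, hu, huD, huS⟩ := hex
    refine .smove _ _ _ ⟨u, Finset.mem_of_mem_erase (Finset.mem_of_mem_erase hu), huD, huS⟩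
      fun v hvB hvD hvS => ?_
    by_cases hvx : v = x
    · subst hvx
      exact .dmove _ _ _ y hyB hyD (by simp [hxy.ne', hyS])
        ((hyx ▸ hnode).insert_insert_of_adj hxy.symm)
    by_cases hvy : v = y
    · subst hvy
      exact .dmove _ _ _ x hxB hxD (by simp [hxy.ne, hxS]) (hnode.insert_insert_of_adj hxy)
    exact ih v (by simp [hvx, hvy, hvB]) hvD hvS hxD (by simp [Ne.symm hvx, hxS]) hyD
      (by simp [Ne.symm hvy, hyS])

end MBWinOn

end Board

section Pendant

variable {G : SimpleGraph V} {s : Finset V} {A : Set V} {S : Finset V} {x y z : V}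

/-- `xy` is a pendant `P₂` of `G[s]` attached at `z`. -/
structure IsPendantP2 (G : SimpleGraph V) (s : Finset V) (x y z : V) : Prop where
  x_mem : x ∈ s
  y_mem : y ∈ s
  z_mem : z ∈ s
  z_ne_x : z ≠ x
  adj_xy : G.Adj x y
  adj_yz : G.Adj y z
  eq_of_adj_x : ∀ w ∈ s, G.Adj x w → w = y
  eq_of_adj_y : ∀ w ∈ s, G.Adj y w → w = x ∨ w = z

namespace IsPendantP2

theorem closedNbhd_x (hp : IsPendantP2 G s x y z) {u : V} (hu : u ∈ s)
    (hux : u = x ∨ G.Adj u x) : u = x ∨ u = y :=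
  hux.imp_right fun h => hp.eq_of_adj_x u hu h.symm

theorem closedNbhd_y (hp : IsPendantP2 G s x y z) {u : V} (hu : u ∈ s)
    (huy : u = y ∨ G.Adj u y) : u = y ∨ u = x ∨ u = z :=
  huy.imp_right fun h => hp.eq_of_adj_y u hu h.symm

variable [DecidableEq V] {t : Bool} {k : ℕ}

/-- Once Dominator owns the support vertex `y`, the leaf `x` is dead and `y` only matters
through `z`. -/
theorem erase_of_support (hp : IsPendantP2 G s x y z) (hA : A ⊆ {x})
    (h : MBWinOn G s A t k {y} S) (hxS : x ∉ S) :
    MBWinOn G ((s.erase x).erase y) {z} t k ∅ S := by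
  have h1 := h.erase_dead (by simpa using hp.adj_xy.ne) hxS fun w hw hxw =>
    Or.inr ⟨y, Finset.mem_singleton_self y, Or.inl (hp.eq_of_adj_x w hw hxw).symm⟩
  have h2 := h1.erase_dominator (Finset.mem_singleton_self y)
  rw [Finset.erase_singleton] at h2
  refine h2.change_exempt ?_
  rintro v hv hvA hvz
  obtain ⟨hvy, hvx, hvs⟩ : v ≠ y ∧ v ≠ x ∧ v ∈ s := by simpa using hv
  rcases hvA with hvA | hvy'
  · exact absurd (hA hvA) hvx
  · rcases hp.closedNbhd_y hvs (hvy'.imp Eq.symm fun h => h.symm) with h | h | h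
    · exact absurd h hvy
    · exact absurd h hvx
    · exact absurd h hvz

end IsPendantP2

end Pendant

section Lower

variable {G : SimpleGraph V} {s : Finset V} {x y z : V} [DecidableEq V]

/-- The invariant of the lower bound: removing a pendant `P₂` preserves it at the cost of exactly
one move. -/
def DWinOrExemptSWin (G : SimpleGraph V) (s : Finset V) (κ : ℕ) : Prop :=
  MBWinOn G s ∅ true κ ∅ ∅ ∨ ∃ w, MBWinOn G s {w} false κ ∅ ∅

namespace IsPendantP2

theorem dGame_step (hp : IsPendantP2 G s x y z) {κ : ℕ} (h : MBWinOn G s ∅ true κ ∅ ∅) :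
    ∃ κ', κ = κ' + 1 ∧ DWinOrExemptSWin G ((s.erase x).erase y) κ' := by
  obtain ⟨κ', v, rfl, hvs, -, -, h1⟩ :=
    h.exists_dominator_move (not_dominatesOn_empty hp.x_mem (Set.notMem_empty x))
  rw [Finset.insert_empty] at h1
  refine ⟨κ', rfl, ?_⟩
  by_cases hvy : v = y
  · subst hvy
    exact Or.inr ⟨z, hp.erase_of_support (Set.empty_subset _) h1 (Finset.notMem_empty x)⟩
  have h2 := h1.staller_move hp.y_mem (by simpa using Ne.symm hvy) (Finset.notMem_empty y)
  refine Or.inl ?_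
  by_cases hvx : v = x
  · subst hvx
    simpa using (h2.erase_leaf_pair hp.eq_of_adj_x (Finset.mem_singleton_self v)
      (Finset.mem_insert_self y ∅)).anti_staller (Finset.empty_subset _)
  -- Staller threatens to isolate the leaf `x`.
  obtain ⟨κ₁, rfl, h3⟩ := h2.forced_reply hp.x_mem (Set.notMem_empty x) hp.x_mem
    (by simpa using hp.adj_xy.ne) (Or.inl rfl)
    (fun u hu hux => by
      rw [Finset.mem_singleton] at hu
      subst hu
      exact (hp.closedNbhd_x hvs hux).elim hvx hvy)
    (fun u hu hux => by simpa using hp.closedNbhd_x hu hux)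
  have h4 := h3.erase_leaf_pair hp.eq_of_adj_x (Finset.mem_insert_self x _)
    (Finset.mem_singleton_self y)
  rw [Finset.erase_insert (by simpa using Ne.symm hvx)] at h4
  exact .dmove _ _ _ v (by simp [hvs, hvx, hvy]) (Finset.notMem_empty v) (Finset.notMem_empty v)
    (by simpa using h4.anti_staller (Finset.empty_subset _))

theorem sGame_step (hp : IsPendantP2 G s x y z) {w : V} (hwx : w ≠ x) {κ : ℕ}
    (h : MBWinOn G s {w} false κ ∅ ∅) :
    ∃ κ', κ = κ' + 1 ∧ MBWinOn G ((s.erase x).erase y) {w} false κ' ∅ ∅ := by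
  have h1 := h.staller_move hp.y_mem (Finset.notMem_empty y) (Finset.notMem_empty y)
  -- Staller threatens to isolate the leaf `x`.
  obtain ⟨κ', rfl, h2⟩ := h1.forced_reply hp.x_mem (Ne.symm hwx) hp.x_mem
    (by simpa using hp.adj_xy.ne) (Or.inl rfl) (fun u hu => absurd hu (Finset.notMem_empty u))
    (fun u hu hux => by simpa using hp.closedNbhd_x hu hux)
  refine ⟨κ', rfl, ?_⟩
  simpa using (h2.erase_leaf_pair hp.eq_of_adj_x (Finset.mem_insert_self x ∅)
    (Finset.mem_insert_self y ∅)).anti_staller (Finset.empty_subset _)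

theorem sGame_leaf_step (hp : IsPendantP2 G s x y z) {κ : ℕ} (h : MBWinOn G s {x} false κ ∅ ∅) :
    ∃ κ', κ = κ' + 1 ∧ DWinOrExemptSWin G ((s.erase x).erase y) κ' := by
  have hxt : x ∉ (s.erase x).erase y := by simp
  have hyx : y ≠ x := hp.adj_xy.ne'
  have hzy : z ≠ y := hp.adj_yz.ne'
  have h1 := h.staller_move hp.z_mem (Finset.notMem_empty z) (Finset.notMem_empty z)
  obtain ⟨κ', u, rfl, hus, -, huz, h2⟩ :=
    h1.exists_dominator_move (not_dominatesOn_empty hp.y_mem hyx)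
  simp only [Finset.insert_empty, Finset.mem_singleton] at h2 huz
  refine ⟨κ', rfl, ?_⟩
  by_cases huy : u = y
  · subst huy
    exact Or.inr ⟨z, (hp.erase_of_support subset_rfl h2
      (by simpa using hp.z_ne_x.symm)).anti_staller (Finset.empty_subset _)⟩
  have h3 := h2.staller_move hp.y_mem (by simpa using Ne.symm huy) (by simpa using Ne.symm hzy)
  refine Or.inl ?_
  by_cases hux : u = x
  · subst hux
    have h4 := (h3.erase_leaf_pair hp.eq_of_adj_x (Finset.mem_singleton_self u)
      (Finset.mem_insert_self y _)).anti_staller (Finset.empty_subset _)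
    simpa using h4.exempt_empty_of_notMem hxt
  -- The leaf is exempt, so Staller's threat is to isolate the support vertex `y`.
  obtain ⟨κ₁, rfl, h4⟩ := h3.forced_reply hp.y_mem hyx hp.x_mem
    (by simp [hp.adj_xy.ne, hp.z_ne_x.symm]) (Or.inr hp.adj_xy)
    (fun v hv hvy => by
      rw [Finset.mem_singleton] at hv
      subst hv
      exact (hp.closedNbhd_y hus hvy).elim huy (·.elim hux huz))
    (fun v hv hvy => by simpa [or_comm, or_left_comm] using hp.closedNbhd_y hv hvy)
  have h5 := h4.erase_leaf_pair hp.eq_of_adj_x (Finset.mem_insert_self x _)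
    (Finset.mem_insert_self y _)
  rw [Finset.erase_insert (by simpa using Ne.symm hux)] at h5
  exact .dmove _ _ _ u (by simp [hus, hux, huy]) (Finset.notMem_empty u) (Finset.notMem_empty u)
    (by simpa using (h5.anti_staller (Finset.empty_subset _)).exempt_empty_of_notMem hxt)

theorem dWinOrExemptSWin_step (hp : IsPendantP2 G s x y z) {κ : ℕ}
    (h : DWinOrExemptSWin G s κ) :
    ∃ κ', κ = κ' + 1 ∧ DWinOrExemptSWin G ((s.erase x).erase y) κ' := by
  rcases h with h | ⟨w, h⟩
  · exact hp.dGame_step h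
  by_cases hwx : w = x
  · subst hwx
    exact hp.sGame_leaf_step h
  · obtain ⟨κ', rfl, h'⟩ := hp.sGame_step hwx h
    exact ⟨κ', rfl, Or.inr ⟨w, h'⟩⟩

end IsPendantP2

namespace DWinOrExemptSWin

variable {κ : ℕ}

theorem ne_zero (h : DWinOrExemptSWin G s κ) (hx : x ∈ s) (hy : y ∈ s) (hxy : x ≠ y) :
    κ ≠ 0 := by
  rintro rfl
  rcases h with h | ⟨w, h⟩
  · exact not_dominatesOn_empty hx (Set.notMem_empty x) h.dominatesOn_of_zero
  · by_cases hwx : w = x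
    · exact not_dominatesOn_empty hy (by simpa [hwx] using Ne.symm hxy) h.dominatesOn_of_zero
    · exact not_dominatesOn_empty hx (by simpa using Ne.symm hwx) h.dominatesOn_of_zero

theorem mbWinOn_succ (h : DWinOrExemptSWin G s κ) : MBWinOn G s ∅ true (κ + 1) ∅ ∅ := by
  rcases h with h | ⟨w, h⟩
  · exact h.succ
  by_cases hw : w ∈ s
  · refine .dmove _ _ _ w hw (Finset.notMem_empty w) (Finset.notMem_empty w) ?_
    exact (h.insert_dominator (Finset.notMem_empty w)).change_exempt fun v _ hv _ =>
      ⟨w, Finset.mem_insert_self w ∅, Or.inl (Set.mem_singleton_iff.mp hv).symm⟩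
  · exact (h.exempt_empty_of_notMem hw).true_of_false.succ

end DWinOrExemptSWin

theorem PendantStep.exists_adj {t : Finset V} (h : PendantStep G s t) :
    ∃ x ∈ s, ∃ y ∈ s, G.Adj x y ∧ t = (s.erase x).erase y := by
  rcases h with ⟨x, hx, y, hy, hxy, -, -, rfl⟩ | ⟨x, hx, y, hy, hxy, rfl, rfl⟩
  · exact ⟨x, hx, y, hy, hxy, rfl⟩
  · refine ⟨x, hx, y, hy, hxy, ?_⟩
    simp [Finset.erase_insert_eq_erase, Finset.erase_eq_of_notMem, hxy.ne]

theorem PendantStep.card_eq {t : Finset V} (h : PendantStep G s t) : s.card = t.card + 2 := by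
  obtain ⟨x, hx, y, hy, hxy, rfl⟩ := h.exists_adj
  have h1 := Finset.card_erase_add_one hx
  have h2 := Finset.card_erase_add_one (Finset.mem_erase.mpr ⟨hxy.ne', hy⟩)
  omega

theorem PendantStep.dWinOrExemptSWin_step {t : Finset V} (h : PendantStep G s t) {κ : ℕ}
    (hκ : DWinOrExemptSWin G s κ) : ∃ κ', κ = κ' + 1 ∧ DWinOrExemptSWin G t κ' := by
  rcases h with ⟨x, hx, y, hy, hxy, hx', ⟨z, hz, hzx, hyz, hy'⟩, rfl⟩ |
    ⟨x, hx, y, hy, hxy, rfl, rfl⟩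
  · exact IsPendantP2.dWinOrExemptSWin_step ⟨hx, hy, hz, hzx, hxy, hyz, hx', hy'⟩ hκ
  · obtain ⟨κ', rfl⟩ := Nat.exists_eq_succ_of_ne_zero (hκ.ne_zero hx hy hxy.ne)
    exact ⟨κ', rfl, Or.inl (.win _ _ _ _ dominatesOn_empty_board)⟩

theorem dWinOrExemptSWin_of_reflTransGen {r : Finset V}
    (h : Relation.ReflTransGen (PendantStep G) s r) {κ : ℕ} (hκ : DWinOrExemptSWin G s κ) :
    ∃ n κ', s.card = r.card + 2 * n ∧ κ = κ' + n ∧ DWinOrExemptSWin G r κ' := by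
  induction h using Relation.ReflTransGen.head_induction_on generalizing κ with
  | refl => exact ⟨0, κ, rfl, rfl, hκ⟩
  | head step _ ih =>
    obtain ⟨κ₁, rfl, h₁⟩ := step.dWinOrExemptSWin_step hκ
    obtain ⟨n, κ', hcard, rfl, h'⟩ := ih h₁
    exact ⟨n + 1, κ', by rw [step.card_eq]; omega, by ring, h'⟩

theorem mbWinOn_of_reflTransGen {r : Finset V} (h : Relation.ReflTransGen (PendantStep G) s r)
    {k : ℕ} (hk : MBWinOn G r ∅ true k ∅ ∅) :
    ∃ n, s.card = r.card + 2 * n ∧ MBWinOn G s ∅ true (k + n) ∅ ∅ := by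
  induction h using Relation.ReflTransGen.head_induction_on with
  | refl => exact ⟨0, rfl, hk⟩
  | head step _ ih =>
    obtain ⟨n, hcard, h'⟩ := ih
    obtain ⟨x, hx, y, hy, hxy, rfl⟩ := step.exists_adj
    refine ⟨n + 1, by rw [step.card_eq, hcard]; ring, ?_⟩
    exact h'.succ_of_erase_edge hx hy hxy (Finset.notMem_empty x) (Finset.notMem_empty x)
      (Finset.notMem_empty y) (Finset.notMem_empty y)

end Lower

section Comap

variable {W : Type*} [Fintype W] [DecidableEq W] [DecidableEq V] {G : SimpleGraph V}
  {f : W ↪ V} {A : Set V} {t : Bool} {k : ℕ}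

theorem mbWinOn_map_of_mbWin {D S : Finset W} (h : MBWin (G.comap f) (f ⁻¹' A) t k D S) :
    MBWinOn G (Finset.univ.map f) A t k (D.map f) (S.map f) := by
  induction h with
  | win t k D S hd =>
    refine .win _ _ _ _ fun v hv hvA => ?_
    obtain ⟨w, -, rfl⟩ := Finset.mem_map.mp hv
    obtain ⟨u, hu, huw⟩ := hd w hvA
    exact ⟨f u, Finset.mem_map_of_mem f hu, huw.imp (congrArg f) id⟩
  | dmove k D S v hvD hvS _ ih =>
    refine .dmove _ _ _ (f v) (Finset.mem_map_of_mem f (Finset.mem_univ v)) (by simpa using hvD)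
      (by simpa using hvS) ?_
    simpa [Finset.map_insert] using ih
  | smove k D S hne _ ih =>
    obtain ⟨w, hw⟩ : ∃ w, w ∉ D ∪ S := by simpa [Finset.eq_univ_iff_forall] using hne
    rw [Finset.mem_union, not_or] at hw
    refine .smove _ _ _ ⟨f w, by simp, by simpa using hw.1, by simpa using hw.2⟩ ?_
    intro v hv hvD hvS
    obtain ⟨w, -, rfl⟩ := Finset.mem_map.mp hv
    simpa [Finset.map_insert] using ih w (by simpa using hvD) (by simpa using hvS)

theorem mbWin_of_mbWinOn_map {D' S' : Finset V}
    (h : MBWinOn G (Finset.univ.map f) A t k D' S') {D S : Finset W} (hD : D' = D.map f)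
    (hS : S' = S.map f) : MBWin (G.comap f) (f ⁻¹' A) t k D S := by
  induction h generalizing D S with
  | win t k D' S' hd =>
    subst hD
    refine .win _ _ _ _ fun w hwA => ?_
    obtain ⟨_, hu, huw⟩ := hd (f w) (by simp) hwA
    obtain ⟨u, huD, rfl⟩ := Finset.mem_map.mp hu
    exact ⟨u, huD, huw.imp (f.injective ·) id⟩
  | dmove k D' S' v hv hvD hvS _ ih =>
    subst hD hS
    obtain ⟨v, -, rfl⟩ := Finset.mem_map.mp hv
    exact .dmove _ _ _ v (by simpa using hvD) (by simpa using hvS)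
      (ih (by simp [Finset.map_insert]) rfl)
  | smove k D' S' hex _ ih =>
    subst hD hS
    obtain ⟨v, hv, hvD, hvS⟩ := hex
    obtain ⟨v, -, rfl⟩ := Finset.mem_map.mp hv
    refine .smove _ _ _ (fun h => ?_) fun w hwD hwS => ?_
    · have := h ▸ Finset.mem_univ v
      rw [Finset.mem_union] at this
      exact this.elim (fun h => hvD (Finset.mem_map_of_mem f h))
        fun h => hvS (Finset.mem_map_of_mem f h)
    · exact ih (f w) (by simp) (by simpa using hwD) (by simpa using hwS) rfl
        (by simp [Finset.map_insert])

theorem mbWin_comap_iff {D S : Finset W} :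
    MBWin (G.comap f) (f ⁻¹' A) t k D S ↔
      MBWinOn G (Finset.univ.map f) A t k (D.map f) (S.map f) :=
  ⟨mbWinOn_map_of_mbWin, fun h => mbWin_of_mbWinOn_map h rfl rfl⟩

theorem mbWin_iff_mbWinOn_univ [Fintype V] :
    MBWin G ∅ true k ∅ ∅ ↔ MBWinOn G Finset.univ ∅ true k ∅ ∅ := by
  have h := mbWin_comap_iff (G := G) (f := .refl V) (A := ∅) (t := true) (k := k) (D := ∅)
    (S := ∅)
  rwa [Finset.map_refl, Finset.map_empty] at h

theorem mbWin_induce_iff_mbWinOn (s : Finset V) :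
    MBWin (G.induce (s : Set V)) ∅ true k ∅ ∅ ↔ MBWinOn G s ∅ true k ∅ ∅ := by
  have hs : Finset.univ.map (Function.Embedding.subtype (· ∈ (s : Set V))) = s := by
    ext v
    simp
  have h := mbWin_comap_iff (G := G) (f := .subtype (· ∈ (s : Set V))) (A := ∅) (t := true)
    (k := k) (D := ∅) (S := ∅)
  rwa [hs, Finset.map_empty] at h

end Comap

section GammaMB

variable [Fintype V] [DecidableEq V] {G : SimpleGraph V}

theorem gammaMB_le_of_mbWin {m : ℕ} (h : MBWin G ∅ true m ∅ ∅) : gammaMB G ≤ m :=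
  sInf_le ⟨m, h, rfl⟩

theorem le_gammaMB_of_forall {c : ℕ∞} (h : ∀ m, MBWin G ∅ true m ∅ ∅ → c ≤ m) :
    c ≤ gammaMB G :=
  le_sInf <| by
    rintro _ ⟨m, hm, rfl⟩
    exact h m hm

theorem le_add_gammaMB_of_forall {W : Type*} [Fintype W] [DecidableEq W] {H : SimpleGraph W}
    {a c : ℕ∞} (h : ∀ m, MBWin H ∅ true m ∅ ∅ → a ≤ c + m) : a ≤ c + gammaMB H := by
  rw [gammaMB, gammaMBRes, ENat.add_sInf]
  refine le_iInf₂ ?_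
  rintro _ ⟨m, hm, rfl⟩
  exact h m hm

end GammaMB

/-- Let `G` be a finite simple graph, `R(G)` a residual graph of `G`, and
`H = G − V(R(G))`.  Then `n(H)/2 + γ_MB(R(G)) − 1 ≤ γ_MB(G) ≤ n(H)/2 + γ_MB(R(G))`
(both bounds being `∞` when `γ_MB(R(G)) = ∞`). -/
theorem gammaMB_bounds_of_residual [Fintype V] [DecidableEq V] (G : SimpleGraph V)
    (s : Finset V) (hs : IsResidualSet G s) :
    (((Fintype.card V - s.card) / 2 : ℕ) : ℕ∞) + gammaMB (G.induce (↑s : Set V)) - 1 ≤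
        gammaMB G ∧
      gammaMB G ≤
        (((Fintype.card V - s.card) / 2 : ℕ) : ℕ∞) + gammaMB (G.induce (↑s : Set V)) := by
  have hchain := hs.1
  rw [← Finset.card_univ]
  constructor
  · refine le_gammaMB_of_forall fun m hm => ?_
    obtain ⟨n, κ, hcard, rfl, hκ⟩ :=
      dWinOrExemptSWin_of_reflTransGen hchain (.inl (mbWin_iff_mbWinOn_univ.mp hm))
    have hR := gammaMB_le_of_mbWin ((mbWin_induce_iff_mbWinOn s).mpr hκ.mbWinOn_succ)
    rw [show (Finset.univ.card - s.card) / 2 = n by omega, tsub_le_iff_right]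
    calc (n : ℕ∞) + gammaMB (G.induce (s : Set V)) ≤ n + (κ + 1 : ℕ) := by gcongr
      _ = (κ + n : ℕ) + 1 := by push_cast; ring
  · refine le_add_gammaMB_of_forall fun m hm => ?_
    obtain ⟨n, hcard, hG⟩ := mbWinOn_of_reflTransGen hchain ((mbWin_induce_iff_mbWinOn s).mp hm)
    rw [show (Finset.univ.card - s.card) / 2 = n by omega, add_comm]
    exact_mod_cast gammaMB_le_of_mbWin (mbWin_iff_mbWinOn_univ.mpr hG)
end
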